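/- Let p = p_n, q = q_n be sequences with p ≍ q ≍ ρ_n, ρ_n → 0, and p − q = Ω(ρ_n), and define t := (1/2)·log((p/(1−p))/(q/(1−q))) and λ := (1/(2t))·log((1−q)/(1−p)). Then λ − q = Ω(ρ_n) > 0 and (p+q)/2 − λ = Ω(ρ_n) > 0; that is, there exist constants c₁, c₂ > 0 such that for all sufficiently large n, λ − q ≥ c₁·ρ_n and (p+q)/2 − λ ≥ c₂·ρ_n. -/

import Mathlib

open Filter

/-- `t = (1/2)·log((p/(1−p))/(q/(1−q)))`. -/
noncomputable def tPar (p q : ℝ) : ℝ := (1 / 2) * Real.log ((p / (1 - p)) / (q / (1 - q)))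

/-- `λ = (1/(2t))·log((1−q)/(1−p))`. -/
noncomputable def lamPar (p q : ℝ) : ℝ := (1 / (2 * tPar p q)) * Real.log ((1 - q) / (1 - p))

private lemma log_le_two_sqrt {x : ℝ} (hx : 0 < x) :
    Real.log x ≤ 2 * (Real.sqrt x - 1) := by
  have h := Real.log_le_sub_one_of_pos (Real.sqrt_pos.2 hx)
  have h2 := Real.log_sqrt hx.le
  linarith

private lemma artanh_lower (u : ℝ) (h0 : 0 ≤ u) (h1 : u < 1) :
    2*u + 2/3*u^3 ≤ Real.log (1+u) - Real.log (1-u) := by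
  set f : ℝ → ℝ := fun x => Real.log (1+x) - Real.log (1-x) - (2*x + 2/3*x^3) with hf
  have hd : ∀ x ∈ Set.Ico (0:ℝ) 1, HasDerivAt f (1/(1+x) + 1/(1-x) - (2 + 2*x^2)) x := by
    intro x hx
    have h1x : (1:ℝ) + x ≠ 0 := by nlinarith [hx.1]
    have h2x : (1:ℝ) - x ≠ 0 := by nlinarith [hx.2]
    have d1 : HasDerivAt (fun y : ℝ => Real.log (1+y)) (1/(1+x)) x := by
      have hi : HasDerivAt (fun y : ℝ => 1+y) 1 x := by
        simpa using (hasDerivAt_id x).const_add (1:ℝ)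
      exact ((Real.hasDerivAt_log h1x).comp x hi).congr_deriv (by rw [one_div, mul_one])
    have d2 : HasDerivAt (fun y : ℝ => Real.log (1-y)) (-(1/(1-x))) x := by
      have hi : HasDerivAt (fun y : ℝ => 1-y) (-1) x := by
        exact (hasDerivAt_id x).const_sub (1:ℝ)
      have := (Real.hasDerivAt_log h2x).comp x hi
      exact this.congr_deriv (by rw [one_div, mul_neg_one])
    have d3 : HasDerivAt (fun y : ℝ => 2*y + 2/3*y^3) (2 + 2*x^2) x := by
      have := ((hasDerivAt_id x).const_mul (2:ℝ)).add ((hasDerivAt_pow 3 x).const_mul (2/3 : ℝ))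
      exact this.congr_deriv (by push_cast; ring)
    have := (d1.sub d2).sub d3
    exact this.congr_deriv (by ring)
  have mono : MonotoneOn f (Set.Icc 0 u) := by
    apply monotoneOn_of_deriv_nonneg (convex_Icc 0 u)
    · intro x hx
      exact (hd x ⟨hx.1, lt_of_le_of_lt hx.2 h1⟩).differentiableAt.continuousAt.continuousWithinAt
    · intro x hx
      rw [interior_Icc] at hx
      exact (hd x ⟨hx.1.le, lt_trans hx.2 h1⟩).differentiableAt.differentiableWithinAt
    · intro x hx
      rw [interior_Icc] at hx
      rw [(hd x ⟨hx.1.le, lt_trans hx.2 h1⟩).deriv]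
      have hx0 : 0 < x := hx.1
      have hx1 : x < 1 := lt_trans hx.2 h1
      have hA : (0:ℝ) < 1 + x := by linarith
      have hB : (0:ℝ) < 1 - x := by linarith
      have e : 1/(1+x) + 1/(1-x) = 2/((1+x)*(1-x)) := by
        field_simp
        ring
      rw [e]
      rw [le_sub_iff_add_le, zero_add, le_div_iff₀ (by positivity)]
      nlinarith [pow_nonneg hx0.le 4]
  have h0' : f 0 ≤ f u := mono (Set.left_mem_Icc.2 h0) (Set.right_mem_Icc.2 h0) h0
  have hf0 : f 0 = 0 := by simp [hf]
  have hfu : f u = Real.log (1+u) - Real.log (1-u) - (2*u + 2/3*u^3) := rfl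
  rw [hf0, hfu] at h0'
  linarith

set_option maxHeartbeats 2000000 in
private lemma key {a b c P Q R : ℝ} (ha : 0 < a) (hab : a ≤ b) (hc : 0 < c)
    (hR : 0 < R) (hQ : a * R ≤ Q) (hPQ : Q < P) (hP : P ≤ b * R)
    (hg : c * R ≤ P - Q) (hhalf : P ≤ 1/2) (hsm : R ≤ c^3/(24*b^4)) :
    a*c^2/(4*b^2) * R ≤ lamPar P Q - Q ∧ 0 < lamPar P Q - Q ∧
    a*c^3/(24*b^3) * R ≤ (P+Q)/2 - lamPar P Q ∧ 0 < (P+Q)/2 - lamPar P Q := by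
  have hb : 0 < b := lt_of_lt_of_le ha hab
  have hQ0 : 0 < Q := lt_of_lt_of_le (by positivity) hQ
  have hP0 : 0 < P := hQ0.trans hPQ
  have hP1 : P < 1 := by linarith
  have h1P : (0:ℝ) < 1 - P := by linarith
  have h1Q : (0:ℝ) < 1 - Q := by linarith
  set Lp := Real.log (P/Q) with hLp
  set L1 := Real.log ((1-Q)/(1-P)) with hL1
  have hLp0 : 0 < Lp := Real.log_pos (by rw [lt_div_iff₀ hQ0]; linarith)
  have hL10 : 0 < L1 := Real.log_pos (by rw [lt_div_iff₀ h1P]; linarith)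
  have hL2 : 0 < Lp + L1 := by linarith
  -- lamPar = L1/(Lp+L1)
  have ht : tPar P Q = (Lp + L1) / 2 := by
    rw [tPar, hLp, hL1,
      show (P/(1-P))/(Q/(1-Q)) = (P/Q) * ((1-Q)/(1-P)) by field_simp,
      Real.log_mul (by positivity) (by positivity)]
    ring
  have hlam : lamPar P Q = L1 / (Lp + L1) := by
    rw [lamPar, ht, ← hL1]
    field_simp
  -- log bounds
  have hL1lb : (P - Q)/(1-Q) ≤ L1 := by
    have h := Real.log_le_sub_one_of_pos (show (0:ℝ) < (1-P)/(1-Q) by positivity)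
    have e : Real.log ((1-P)/(1-Q)) = -L1 := by
      rw [hL1, ← Real.log_inv]
      congr 1
      field_simp
    have e2 : (1-P)/(1-Q) - 1 = -((P-Q)/(1-Q)) := by field_simp; ring
    rw [e, e2] at h
    linarith
  have hL1ub : L1 ≤ (P - Q)/(1-P) := by
    have h := Real.log_le_sub_one_of_pos (show (0:ℝ) < (1-Q)/(1-P) by positivity)
    have e2 : (1-Q)/(1-P) - 1 = (P-Q)/(1-P) := by field_simp; ring
    rw [← hL1, e2] at h
    exact h
  have hL1ub' : L1 ≤ 1 := by
    have : (P-Q)/(1-P) ≤ 1 := by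
      rw [div_le_one h1P]; linarith
    linarith
  have hPQr : P/Q ≤ b/a := by
    rw [div_le_div_iff₀ hQ0 ha]
    nlinarith
  have hLpub : Lp ≤ b/a - 1 := by
    have h := Real.log_le_sub_one_of_pos (show (0:ℝ) < P/Q by positivity)
    rw [← hLp] at h
    linarith
  have hL2ub : Lp + L1 ≤ b/a := by linarith
  -- sqrt facts
  set sp := Real.sqrt P with hsp'
  set sq := Real.sqrt Q with hsq'
  have hsp : sp^2 = P := Real.sq_sqrt hP0.le
  have hsq : sq^2 = Q := Real.sq_sqrt hQ0.le
  have hsp0 : 0 < sp := Real.sqrt_pos.2 hP0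
  have hsq0 : 0 < sq := Real.sqrt_pos.2 hQ0
  have hQLp : Q * Lp ≤ 2*(sp*sq - Q) := by
    have h := log_le_two_sqrt (show (0:ℝ) < P/Q by positivity)
    rw [← hLp] at h
    have hdiv : Real.sqrt (P/Q) = sp / sq := Real.sqrt_div hP0.le Q
    rw [hdiv] at h
    have := mul_le_mul_of_nonneg_left h hQ0.le
    have e : Q * (2*(sp/sq - 1)) = 2*(sp*sq - Q) := by
      rw [← hsq]
      field_simp
    linarith
  -- first numerator bound
  have hN1 : c^2/(4*b) * R ≤ (1-Q)*L1 - Q*Lp := by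
    have e1 : P - Q ≤ (1-Q)*L1 := by
      have h := mul_le_mul_of_nonneg_left hL1lb h1Q.le
      have e : (1-Q)*((P-Q)/(1-Q)) = P - Q := by field_simp
      linarith
    have e2 : (sp - sq)*(sp + sq) = P - Q := by rw [← hsp, ← hsq]; ring
    have e3 : (sp + sq)^2 ≤ 4*b*R := by
      have h0 : (0:ℝ) ≤ (sp - sq)^2 := sq_nonneg _
      have h1 : (sp + sq)^2 + (sp - sq)^2 = 2*(P + Q) := by rw [← hsp, ← hsq]; ring
      linarith
    have e4 : c^2/(4*b) * R ≤ (sp - sq)^2 := by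
      have h5 : c^2*R^2 ≤ (P - Q)^2 := by
        have h := mul_self_le_mul_self (by positivity : (0:ℝ) ≤ c*R) hg
        calc c^2*R^2 = (c*R)*(c*R) := by ring
          _ ≤ (P-Q)*(P-Q) := h
          _ = (P-Q)^2 := by ring
      have h6 : (sp - sq)^2 * (sp + sq)^2 = (P-Q)^2 := by rw [← mul_pow, e2]
      have h7 : (P-Q)^2 ≤ (sp-sq)^2 * (4*b*R) := by
        calc (P-Q)^2 = (sp - sq)^2 * (sp + sq)^2 := h6.symm
          _ ≤ (sp-sq)^2 * (4*b*R) := mul_le_mul_of_nonneg_left e3 (sq_nonneg _)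
      rw [div_mul_eq_mul_div, div_le_iff₀ (by positivity : (0:ℝ) < 4*b)]
      have h8 : (c^2*R)*R ≤ ((sp-sq)^2*(4*b))*R := by
        calc (c^2*R)*R = c^2*R^2 := by ring
          _ ≤ (P-Q)^2 := h5
          _ ≤ (sp-sq)^2*(4*b*R) := h7
          _ = ((sp-sq)^2*(4*b))*R := by ring
      exact le_of_mul_le_mul_right h8 hR
    have e5 : P + Q - 2*(sp*sq) = (sp - sq)^2 := by rw [← hsp, ← hsq]; ring
    linarith
  -- second numerator bound
  have hN2 : c^3/(24*b^2) * R ≤ (P+Q)/2*Lp - (1-(P+Q)/2)*L1 := by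
    have hPQs : 0 < P + Q := by linarith
    have hu := artanh_lower ((P-Q)/(P+Q)) (div_nonneg (by linarith) (by linarith))
      (by rw [div_lt_one hPQs]; linarith)
    have e1 : (1:ℝ) + (P-Q)/(P+Q) = 2*P/(P+Q) := by field_simp; ring
    have e2 : (1:ℝ) - (P-Q)/(P+Q) = 2*Q/(P+Q) := by field_simp; ring
    rw [e1, e2, ← Real.log_div (by positivity) (by positivity)] at hu
    have e3 : (2*P/(P+Q))/(2*Q/(P+Q)) = P/Q := by field_simp
    rw [e3, ← hLp] at hu
    -- (P+Q)/2 * Lp ≥ (P-Q) + (P-Q)^3/(3*(P+Q)^2)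
    have e4 : (P+Q)/2 * (2*((P-Q)/(P+Q)) + 2/3*((P-Q)/(P+Q))^3)
        = (P-Q) + (P-Q)^3/(3*(P+Q)^2) := by
      field_simp
    have e5 : (P-Q) + (P-Q)^3/(3*(P+Q)^2) ≤ (P+Q)/2 * Lp := by
      have h := mul_le_mul_of_nonneg_left hu (by positivity : (0:ℝ) ≤ (P+Q)/2)
      rw [e4] at h
      exact h
    have e6 : c^3/(12*b^2)*R ≤ (P-Q)^3/(3*(P+Q)^2) := by
      have h1 : (c*R)^3 ≤ (P-Q)^3 := pow_le_pow_left₀ (by positivity) hg 3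
      have h2 : (P+Q)^2 ≤ (2*b*R)^2 := pow_le_pow_left₀ (by linarith) (by linarith) 2
      rw [le_div_iff₀ (by positivity)]
      have : c^3/(12*b^2)*R * (3*(P+Q)^2) ≤ c^3/(12*b^2)*R * (3*(2*b*R)^2) := by
        apply mul_le_mul_of_nonneg_left _ (by positivity)
        linarith
      have e : c^3/(12*b^2)*R * (3*(2*b*R)^2) = (c*R)^3 := by
        field_simp
        ring
      linarith
    -- upper bound the L1 term
    have hcoef : (0:ℝ) ≤ 1 - (P+Q)/2 := by linarith
    have e7 : (1-(P+Q)/2)*L1 ≤ (P-Q) + (P-Q)^2 := by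
      have h := mul_le_mul_of_nonneg_left hL1ub hcoef
      have h2 : (1-(P+Q)/2)*((P-Q)/(1-P)) ≤ (P-Q) + (P-Q)^2 := by
        rw [show (1-(P+Q)/2)*((P-Q)/(1-P)) = ((1-(P+Q)/2)*(P-Q))/(1-P) by ring,
          div_le_iff₀ h1P]
        have hid : ((P-Q)+(P-Q)^2)*(1-P) - (1-(P+Q)/2)*(P-Q)
            = (P-Q)*((P-Q)*(1/2-P)) := by ring
        have hnn : (0:ℝ) ≤ (P-Q)*((P-Q)*(1/2-P)) :=
          mul_nonneg (by linarith) (mul_nonneg (by linarith) (by linarith))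
        linarith
      linarith
    have e8 : (P-Q)^2 ≤ b^2*R^2 := by
      have h := mul_self_le_mul_self (by linarith : (0:ℝ) ≤ P-Q) (by linarith : P-Q ≤ b*R)
      calc (P-Q)^2 = (P-Q)*(P-Q) := by ring
        _ ≤ (b*R)*(b*R) := h
        _ = b^2*R^2 := by ring
    have e9 : b^2*R^2 ≤ c^3/(24*b^2)*R := by
      have h := mul_le_mul_of_nonneg_left hsm (show (0:ℝ) ≤ b^2*R by positivity)
      have e : b^2*R*(c^3/(24*b^4)) = c^3/(24*b^2)*R := by field_simp
      calc b^2*R^2 = b^2*R*R := by ring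
        _ ≤ b^2*R*(c^3/(24*b^4)) := h
        _ = c^3/(24*b^2)*R := e
    have : c^3/(12*b^2)*R - c^3/(24*b^2)*R = c^3/(24*b^2)*R := by ring
    linarith
  -- conclude
  have heq1 : lamPar P Q - Q = ((1-Q)*L1 - Q*Lp)/(Lp+L1) := by
    rw [hlam]
    field_simp
    ring
  have hg1 : a*c^2/(4*b^2) * R ≤ lamPar P Q - Q := by
    rw [heq1, le_div_iff₀ hL2]
    have h1 : a*c^2/(4*b^2)*R*(Lp+L1) ≤ a*c^2/(4*b^2)*R*(b/a) :=
      mul_le_mul_of_nonneg_left hL2ub (by positivity)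
    have h2 : a*c^2/(4*b^2)*R*(b/a) = c^2/(4*b)*R := by field_simp
    linarith
  have heq2 : (P+Q)/2 - lamPar P Q = ((P+Q)/2*Lp - (1-(P+Q)/2)*L1)/(Lp+L1) := by
    rw [hlam]
    field_simp
    ring
  have hg2 : a*c^3/(24*b^3) * R ≤ (P+Q)/2 - lamPar P Q := by
    rw [heq2, le_div_iff₀ hL2]
    have h1 : a*c^3/(24*b^3)*R*(Lp+L1) ≤ a*c^3/(24*b^3)*R*(b/a) :=
      mul_le_mul_of_nonneg_left hL2ub (by positivity)
    have h2 : a*c^3/(24*b^3)*R*(b/a) = c^3/(24*b^2)*R := by field_simp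
    linarith
  refine ⟨hg1, lt_of_lt_of_le (by positivity) hg1, hg2, lt_of_lt_of_le (by positivity) hg2⟩

/-- If `p ≍ q ≍ ρ_n`, `ρ_n → 0`, and `p − q = Ω(ρ_n)`, then `λ − q = Ω(ρ_n) > 0` and
`(p+q)/2 − λ = Ω(ρ_n) > 0`. -/
theorem stmt6 (ρ p q : ℕ → ℝ)
    (hρpos : ∀ n, 0 < ρ n) (hρlt : ∀ n, ρ n < 1)
    (hρ0 : Tendsto ρ atTop (nhds 0))
    (a b : ℝ) (ha : 0 < a) (hab : a ≤ b)
    (hbound : ∀ᶠ n in atTop, a * ρ n ≤ q n ∧ q n < p n ∧ p n ≤ b * ρ n)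
    (c : ℝ) (hc : 0 < c) (hgap : ∀ᶠ n in atTop, c * ρ n ≤ p n - q n) :
    ∃ c₁ > (0 : ℝ), ∃ c₂ > (0 : ℝ), ∀ᶠ n in atTop,
      c₁ * ρ n ≤ lamPar (p n) (q n) - q n ∧ 0 < lamPar (p n) (q n) - q n ∧
      c₂ * ρ n ≤ (p n + q n) / 2 - lamPar (p n) (q n) ∧
      0 < (p n + q n) / 2 - lamPar (p n) (q n) := by
  have hb : 0 < b := lt_of_lt_of_le ha hab
  have hε : (0:ℝ) < min (1/(2*b)) (c^3/(24*b^4)) := by positivity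
  have hsmall : ∀ᶠ n in atTop, ρ n < min (1/(2*b)) (c^3/(24*b^4)) :=
    hρ0.eventually_lt_const hε
  refine ⟨a*c^2/(4*b^2), by positivity, a*c^3/(24*b^3), by positivity, ?_⟩
  filter_upwards [hbound, hgap, hsmall] with n hn hg hs
  obtain ⟨hq, hqp, hp⟩ := hn
  have hs1 : ρ n < 1/(2*b) := lt_of_lt_of_le hs (min_le_left _ _)
  have hs2 : ρ n ≤ c^3/(24*b^4) := le_of_lt (lt_of_lt_of_le hs (min_le_right _ _))
  have hhalf : p n ≤ 1/2 := by
    have h2 : b * ρ n < b * (1/(2*b)) := by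
      exact mul_lt_mul_of_pos_left hs1 hb
    have h3 : b * (1/(2*b)) = 1/2 := by field_simp
    linarith
  exact key ha hab hc (hρpos n) hq hqp hp hg hhalf hs2
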